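/- arXiv:1001.5470 — 3 statements merged into one kernel-verified Lean document; each statement's English description precedes it below -/
import Mathlib

section
/- Let (A^ℤ, F) be a cellular automaton, Σ a transitive subshift, and h', h'' bounded-variation curves along which F admits blocking words (equivalently, equicontinuous points). Then for every bounded-variation curve h with h' ≾ h ≾ h'', F also admits a blocking word (hence equicontinuous points) along h. -/
/-!
Say that a set `X` of configurations is consistent on a region of the space-time diagram when
all its members have the same iterates there (`consSet`). If `X` is consistent on two bands
(walls) that are wider than the step of their curves plus the radius of the automaton, and on
the whole stretch between them at time `0`, then it is consistent between them forever: a cell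
between the walls that is on neither of them has its whole neighbourhood between the walls one
step earlier.

Convexity: using transitivity, glue (extensions of) the blocking words `u'` and `u''` into one
word `v' w v''` of the language, placed so that the translated wall along `h'` lies left of `h`
and the one along `h''` lies right of `h + e`. The band along `h` is then trapped between two walls.

Equicontinuous point: transitivity and compactness give `x ∈ S` in which the blocking word occurs
arbitrarily far to the left and to the right. A configuration of `S` close to `x` shares two such
occurrences, hence two walls enclosing the tube along `h`.
-/

open Classical

section Prelude

variable {A : Type*}

/-- The shift map on configurations. -/
def shift (x : ℤ → A) : ℤ → A := fun i => x (i + 1)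

/-- The cylinder of the word `u` placed at position `p`. -/
def cylAt (u : List A) (p : ℤ) : Set (ℤ → A) :=
  {x | ∀ i : Fin u.length, x (p + ((i : ℕ) : ℤ)) = u.get i}

/-- The region of consequences of a set of configurations. -/
def consSet (F : (ℤ → A) → (ℤ → A)) (X : Set (ℤ → A)) : Set (ℤ × ℕ) :=
  {q | ∀ x ∈ X, ∀ y ∈ X, F^[q.2] x q.1 = F^[q.2] y q.1}

/-- `F` is a cellular automaton with neighborhood `⟦r,s⟧`. -/
def IsCA (F : (ℤ → A) → (ℤ → A)) (r s : ℤ) : Prop :=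
  (∀ x, F (shift x) = shift (F x)) ∧
  (∀ x y : ℤ → A, (∀ i : ℤ, r ≤ i → i ≤ s → x i = y i) → F x 0 = F y 0)

/-- A subshift: a closed shift-invariant set. -/
def IsSubshift [TopologicalSpace A] (S : Set (ℤ → A)) : Prop :=
  IsClosed S ∧ shift '' S = S

/-- Two configurations agree on the centered window of radius `m`
(Cantor distance `< 2^{-m}`). -/
def close (m : ℕ) (x y : ℤ → A) : Prop := ∀ i : ℤ, |i| ≤ (m : ℤ) → x i = y i

/-- `y` is in the tube of radius `2^{-k}` along `h` around `x`:
for every time `n` the configurations `σ^{h n} ∘ F^n (x)` and `σ^{h n} ∘ F^n (y)`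
agree on the window of radius `k`. -/
def tube (F : (ℤ → A) → (ℤ → A)) (h : ℕ → ℤ) (k : ℕ) (x y : ℤ → A) : Prop :=
  ∀ n : ℕ, ∀ i : ℤ, |i| ≤ (k : ℤ) → F^[n] x (i + h n) = F^[n] y (i + h n)

/-- `x` is an equicontinuous point along `h` relative to `S`. -/
def eqPt (F : (ℤ → A) → (ℤ → A)) (S : Set (ℤ → A)) (h : ℕ → ℤ) (x : ℤ → A) : Prop :=
  ∀ k : ℕ, ∃ m : ℕ, ∀ y ∈ S, close m x y → tube F h k x y

/-- `F` is sensitive along `h` relative to `S`. -/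
def sensitive (F : (ℤ → A) → (ℤ → A)) (S : Set (ℤ → A)) (h : ℕ → ℤ) : Prop :=
  ∃ k : ℕ, ∀ m : ℕ, ∀ x ∈ S, ∃ y ∈ S, close m x y ∧ ¬ tube F h k x y

/-- `F` is right-expansive along `h` relative to `S`. -/
def rightExpansive (F : (ℤ → A) → (ℤ → A)) (S : Set (ℤ → A)) (h : ℕ → ℤ) : Prop :=
  ∃ k : ℕ, ∀ x ∈ S, ∀ y ∈ S, (∃ i : ℤ, 0 ≤ i ∧ x i ≠ y i) →
    ∀ z ∈ S, ¬ (tube F h k x z ∧ tube F h k y z)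

/-- `F` is left-expansive along `h` relative to `S`. -/
def leftExpansive (F : (ℤ → A) → (ℤ → A)) (S : Set (ℤ → A)) (h : ℕ → ℤ) : Prop :=
  ∃ k : ℕ, ∀ x ∈ S, ∀ y ∈ S, (∃ i : ℤ, i ≤ 0 ∧ x i ≠ y i) →
    ∀ z ∈ S, ¬ (tube F h k x z ∧ tube F h k y z)

/-- Curves with bounded variation. -/
def BV (h : ℕ → ℤ) : Prop := ∃ M : ℤ, 0 < M ∧ ∀ n : ℕ, |h (n + 1) - h n| ≤ M

/-- The preorder `h ≾ k` on curves. -/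
def precsim (h k : ℕ → ℤ) : Prop := ∃ M : ℤ, 0 < M ∧ ∀ n : ℕ, h n ≤ k n + M

/-- The equivalence `h ∼ k` on curves. -/
def simEq (h k : ℕ → ℤ) : Prop := ∃ M : ℤ, 0 < M ∧ ∀ n : ℕ, k n - M ≤ h n ∧ h n ≤ k n + M

/-- The word `u` belongs to the language of `S`. -/
def inLang (S : Set (ℤ → A)) (u : List A) : Prop := ∃ x ∈ S, x ∈ cylAt u 0

/-- Transitivity of a subshift, expressed on its language. -/
def transitiveSubshift (S : Set (ℤ → A)) : Prop :=
  ∀ u v : List A, inLang S u → inLang S v → ∃ w : List A, inLang S (u ++ w ++ v)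

/-- `u` is a blocking word along `h` for the CA `F` of neighborhood `⟦r,s⟧`,
relative to the subshift `S`. -/
def blockingWord (F : (ℤ → A) → (ℤ → A)) (S : Set (ℤ → A)) (h : ℕ → ℤ) (r s : ℤ)
    (u : List A) : Prop :=
  inLang S u ∧
  ∃ e : ℕ, 0 < e ∧
    (∀ n : ℕ, |h (n + 1) - h n| + s < (e : ℤ) ∧ |h (n + 1) - h n| - r < (e : ℤ)) ∧
    (e : ℤ) ≤ u.length ∧
    ∃ p : ℤ, {q : ℤ × ℕ | h q.2 ≤ q.1 ∧ q.1 < h q.2 + (e : ℤ)} ⊆ consSet F (S ∩ cylAt u p)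

end Prelude

section Blocking

variable {A : Type*} {F : (ℤ → A) → (ℤ → A)} {r s : ℤ} {S : Set (ℤ → A)}

lemma shift_eq_translate (x : ℤ → A) : shift x = translate (-1) x := by
  funext i; simp [shift]

lemma shift_injective : Function.Injective (shift : (ℤ → A) → ℤ → A) := fun x y hxy =>
  funext fun i => by simpa [shift] using congrFun hxy (i - 1)

lemma shift_translate (c : ℤ) (x : ℤ → A) : shift (translate c x) = translate (c - 1) x := by
  rw [shift_eq_translate, translate_translate, neg_add_eq_sub]

lemma translate_shift (c : ℤ) (x : ℤ → A) : translate c (shift x) = translate (c - 1) x := by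
  rw [shift_eq_translate, translate_translate, ← sub_eq_add_neg]

lemma IsCA.map_translate (hF : IsCA F r s) (c : ℤ) (x : ℤ → A) :
    F (translate c x) = translate c (F x) := by
  induction c using Int.induction_on generalizing x with
  | zero => simp only [translate_zero]
  | succ c ih =>
    apply shift_injective
    rw [← hF.1, shift_translate, shift_translate, add_sub_cancel_right, ih]
  | pred c ih =>
    rw [← shift_translate, hF.1, ih, shift_translate]

lemma IsCA.iterate_translate (hF : IsCA F r s) (n : ℕ) (c : ℤ) (x : ℤ → A) :
    F^[n] (translate c x) = translate c (F^[n] x) :=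
  Function.Commute.iterate_left (fun y => hF.map_translate c y) n x

lemma IsCA.apply_eq_of_eqOn (hF : IsCA F r s) {x y : ℤ → A} (j : ℤ)
    (hxy : ∀ i, j + r ≤ i → i ≤ j + s → x i = y i) : F x j = F y j := by
  simpa [hF.map_translate] using hF.2 (translate (-j) x) (translate (-j) y) fun i h₁ h₂ => by
    simp [hxy (i + j) (by omega) (by omega)]

lemma translate_mem (hS : shift '' S = S) (c : ℤ) {x : ℤ → A} (hx : x ∈ S) :
    translate c x ∈ S := by
  induction c using Int.induction_on generalizing x with
  | zero => rwa [translate_zero]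
  | succ c ih =>
    rw [← hS] at hx
    obtain ⟨y, hy, rfl⟩ := hx
    rw [translate_shift, add_sub_cancel_right]
    exact ih hy
  | pred c ih =>
    have := Set.mem_image_of_mem shift (ih hx)
    rwa [hS, shift_translate] at this

lemma mem_cylAt {v : List A} {q : ℤ} {x : ℤ → A} :
    x ∈ cylAt v q ↔ ∀ (i : ℕ) (hi : i < v.length), x (q + i) = v[i] :=
  ⟨fun hx i hi => hx ⟨i, hi⟩, fun hx i => hx i i.2⟩

lemma translate_mem_cylAt {v : List A} {q c : ℤ} {x : ℤ → A} :
    translate c x ∈ cylAt v q ↔ x ∈ cylAt v (q - c) := by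
  simp only [mem_cylAt, translate_apply, sub_add_eq_add_sub]

lemma eq_of_mem_cylAt {v : List A} {q j : ℤ} {x y : ℤ → A} (hx : x ∈ cylAt v q)
    (hy : y ∈ cylAt v q) (h₁ : q ≤ j) (h₂ : j < q + v.length) : x j = y j := by
  obtain ⟨i, rfl⟩ : ∃ i : ℕ, j = q + i := ⟨(j - q).toNat, by omega⟩
  have hi : i < v.length := by omega
  rw [mem_cylAt.1 hx i hi, mem_cylAt.1 hy i hi]

lemma mem_cylAt_of_eqOn {v : List A} {q : ℤ} {x y : ℤ → A} (hx : x ∈ cylAt v q)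
    (hxy : ∀ j, q ≤ j → j < q + v.length → x j = y j) : y ∈ cylAt v q :=
  mem_cylAt.2 fun i hi => (hxy _ (by omega) (by omega)).symm.trans (mem_cylAt.1 hx i hi)

lemma cylAt_append_left (v w : List A) (q : ℤ) : cylAt (v ++ w) q ⊆ cylAt v q := fun x hx =>
  mem_cylAt.2 fun i hi => by
    rw [mem_cylAt.1 hx i (by simp; omega), List.getElem_append_left hi]

lemma cylAt_append_right (v w : List A) (q : ℤ) :
    cylAt (v ++ w) q ⊆ cylAt w (q + v.length) := fun x hx =>
  mem_cylAt.2 fun i hi => by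
    rw [add_assoc, ← Nat.cast_add, mem_cylAt.1 hx (v.length + i) (by simp; omega),
      List.getElem_append_right (by omega)]
    simp

lemma isClosed_cylAt [TopologicalSpace A] [DiscreteTopology A] (v : List A) (q : ℤ) :
    IsClosed (cylAt v q) := by
  simp only [cylAt, Set.ofPred_forall]
  exact isClosed_iInter fun i => isClosed_eq (continuous_apply _) continuous_const

lemma inLang.exists_mem_cylAt (hS : shift '' S = S) {u : List A} (hu : inLang S u) (p : ℤ) :
    ∃ x ∈ S, x ∈ cylAt u p := by
  obtain ⟨x, hxS, hxu⟩ := hu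
  exact ⟨translate p x, translate_mem hS p hxS, translate_mem_cylAt.2 (by simpa using hxu)⟩

lemma inLang_of_mem_cylAt (hS : shift '' S = S) {u : List A} {p : ℤ} {x : ℤ → A} (hxS : x ∈ S)
    (hxu : x ∈ cylAt u p) : inLang S u :=
  ⟨translate (-p) x, translate_mem hS _ hxS, translate_mem_cylAt.2 (by simpa using hxu)⟩

lemma inLang.exists_extend (hS : shift '' S = S) {u : List A} (hu : inLang S u) {p a b : ℤ}
    (ha : a ≤ p) (hb : p + u.length ≤ b) :
    ∃ v : List A, inLang S v ∧ (v.length : ℤ) = b - a ∧ cylAt v a ⊆ cylAt u p := by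
  obtain ⟨x, hxS, hxu⟩ := hu.exists_mem_cylAt hS p
  set v := List.ofFn fun i : Fin (b - a).toNat => x (a + i)
  have hxv : x ∈ cylAt v a := mem_cylAt.2 fun i hi => by simp [v]
  have hv : (v.length : ℤ) = b - a := by simp only [v, List.length_ofFn]; omega
  exact ⟨v, inLang_of_mem_cylAt hS hxS hxv, hv, fun y hy =>
    mem_cylAt_of_eqOn hxu fun j h₁ h₂ => eq_of_mem_cylAt hxv hy (by omega) (by omega)⟩

def band (L R : ℕ → ℤ) : Set (ℤ × ℕ) := {q | L q.2 ≤ q.1 ∧ q.1 < R q.2}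

lemma band_mono {L R L' R' : ℕ → ℤ} (hL : ∀ n, L' n ≤ L n) (hR : ∀ n, R n ≤ R' n) :
    band L R ⊆ band L' R' := fun q hq => ⟨(hL q.2).trans hq.1, hq.2.trans_le (hR q.2)⟩

lemma consSet_anti {X Y : Set (ℤ → A)} (hXY : X ⊆ Y) : consSet F Y ⊆ consSet F X :=
  fun _ hq x hx y hy => hq x (hXY hx) y (hXY hy)

lemma band_translate_subset_consSet (hF : IsCA F r s) (hS : shift '' S = S) {L R : ℕ → ℤ}
    {v : List A} {q : ℤ} (hLR : band L R ⊆ consSet F (S ∩ cylAt v q)) (q' : ℤ) :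
    band (fun n => L n + (q' - q)) (fun n => R n + (q' - q)) ⊆ consSet F (S ∩ cylAt v q') := by
  rintro ⟨i, n⟩ ⟨h₁, h₂⟩ x ⟨hxS, hxv⟩ y ⟨hyS, hyv⟩
  have hmem : ∀ z ∈ S, z ∈ cylAt v q' → translate (q - q') z ∈ S ∩ cylAt v q := fun z hzS hzv =>
    ⟨translate_mem hS _ hzS, translate_mem_cylAt.2 (by rwa [sub_sub_cancel])⟩
  have := hLR (a := (i + (q - q'), n)) ⟨by dsimp at h₁ ⊢; omega, by dsimp at h₂ ⊢; omega⟩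
    _ (hmem x hxS hxv) _ (hmem y hyS hyv)
  simpa [hF.iterate_translate] using this

lemma band_subset_consSet (hF : IsCA F r s) {X : Set (ℤ → A)} {L L' R R' : ℕ → ℤ}
    (hL : ∀ n, L n ≤ L' (n + 1) + r) (hR : ∀ n, R (n + 1) + s ≤ R' n)
    (hLwall : band L L' ⊆ consSet F X) (hRwall : band R R' ⊆ consSet F X)
    (h₀ : ∀ i, L 0 ≤ i → i < R' 0 → (i, 0) ∈ consSet F X) :
    band L R' ⊆ consSet F X := by
  rintro ⟨i, n⟩ ⟨h₁, h₂⟩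
  induction n generalizing i with
  | zero => exact h₀ i h₁ h₂
  | succ n ih =>
    by_cases hl : i < L' (n + 1)
    · exact hLwall ⟨h₁, hl⟩
    by_cases hr : R (n + 1) ≤ i
    · exact hRwall ⟨hr, h₂⟩
    intro x hx y hy
    simp only [Function.iterate_succ_apply']
    exact hF.apply_eq_of_eqOn i fun j hj₁ hj₂ =>
      ih j (by linarith [hL n]) (by linarith [hR n]) x hx y hy

lemma le_of_abs_sub_lt {g : ℕ → ℤ} {r s e : ℤ} {n : ℕ}
    (hg : |g (n + 1) - g n| + s < e ∧ |g (n + 1) - g n| - r < e) :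
    g n ≤ g (n + 1) + e + r ∧ g (n + 1) + s ≤ g n + e := by
  have := le_abs_self (g (n + 1) - g n)
  have := neg_abs_le (g (n + 1) - g n)
  constructor <;> linarith [hg.1, hg.2]

lemma inLang.exists_extend_band (hF : IsCA F r s) (hS : shift '' S = S) {u : List A}
    (hu : inLang S u) {L R : ℕ → ℤ} {p a b : ℤ} (hcons : band L R ⊆ consSet F (S ∩ cylAt u p))
    (ha : a ≤ p) (hb : p + u.length ≤ b) :
    ∃ v : List A, inLang S v ∧ (v.length : ℤ) = b - a ∧ ∀ q : ℤ,
      band (fun n => L n + (q - a)) (fun n => R n + (q - a)) ⊆ consSet F (S ∩ cylAt v q) := by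
  obtain ⟨v, hv, hlen, hvu⟩ := hu.exists_extend hS ha hb
  exact ⟨v, hv, hlen, band_translate_subset_consSet hF hS
    (hcons.trans (consSet_anti (Set.inter_subset_inter_right _ hvu)))⟩

lemma exists_blockingWord_of_precsim (hF : IsCA F r s) (hS : shift '' S = S)
    (htrans : transitiveSubshift S) {h' h h'' : ℕ → ℤ} (hb : BV h) (h₁ : precsim h' h)
    (h₂ : precsim h h'') {u' u'' : List A} (hw' : blockingWord F S h' r s u')
    (hw'' : blockingWord F S h'' r s u'') : ∃ u : List A, blockingWord F S h r s u := by
  obtain ⟨M, -, hM⟩ := hb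
  obtain ⟨M₁, -, hM₁⟩ := h₁
  obtain ⟨M₂, -, hM₂⟩ := h₂
  obtain ⟨hu', e', -, hv', -, p', hcons'⟩ := hw'
  obtain ⟨hu'', e'', -, hv'', -, p'', hcons''⟩ := hw''
  set e : ℕ := M.toNat + r.natAbs + s.natAbs + 1
  set a' := min p' (h' 0)
  obtain ⟨v', hv'L, hv'len, hwall'⟩ := hu'.exists_extend_band hF hS (L := h')
    (R := fun n => h' n + e') hcons' (a := a') (b := max (p' + u'.length) (a' + e)) (by omega)
    (by omega)
  -- placed so that the translated wall along `h'` starts left of `h` (as `h' ≤ h + M₁`) and the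
  -- one along `h''` ends right of `h + e` (as `h ≤ h'' + M₂`)
  set p := a' - M₁
  set a'' := min p'' (p + v'.length - M₂ - e)
  obtain ⟨v'', hv''L, hv''len, hwall''⟩ := hu''.exists_extend_band hF hS (L := h'')
    (R := fun n => h'' n + e'') hcons'' (a := a'') (b := max (p'' + u''.length) (h'' 0 + e''))
    (by omega) (by omega)
  obtain ⟨w, hw⟩ := htrans v' v'' hv'L hv''L
  have hXv' : S ∩ cylAt (v' ++ w ++ v'') p ⊆ S ∩ cylAt v' p := Set.inter_subset_inter_right _
    ((cylAt_append_left _ _ _).trans (cylAt_append_left _ _ _))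
  have hXv'' : S ∩ cylAt (v' ++ w ++ v'') p ⊆ S ∩ cylAt v'' (p + v'.length + w.length) :=
    Set.inter_subset_inter_right _ (by simpa [add_assoc] using cylAt_append_right (v' ++ w) v'' p)
  have hlen : ((v' ++ w ++ v'').length : ℤ) = v'.length + w.length + v''.length := by
    simp only [List.length_append, Nat.cast_add]
  refine ⟨v' ++ w ++ v'', hw, e, by omega, fun n => ?_, by omega, p, ?_⟩
  · have := hM n
    generalize |h (n + 1) - h n| = d at *
    omega
  show band h (fun n => h n + e) ⊆ _
  refine (band_mono (fun n => ?_) (fun n => ?_)).trans (band_subset_consSet hF (fun n => ?_)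
    (fun n => ?_) ((hwall' p).trans (consSet_anti hXv')) ((hwall'' _).trans (consSet_anti hXv''))
    fun i hi₁ hi₂ x hx y hy => eq_of_mem_cylAt hx.2 hy.2 (by omega) (by omega))
  · have := hM₁ n
    omega
  · have := hM₂ n
    omega
  · have := (le_of_abs_sub_lt (hv' n)).1
    omega
  · have := (le_of_abs_sub_lt (hv'' n)).2
    omega

lemma inLang.exists_surround (htrans : transitiveSubshift S) {u v : List A} (hu : inLang S u)
    (hv : inLang S v) (b : ℤ) :
    ∃ v' : List A, ∃ b' : ℤ, inLang S v' ∧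
      cylAt v' b' ⊆ cylAt v b ∩ cylAt u b' ∩ cylAt u (b' + v'.length - u.length) ∧
      b' + u.length ≤ b ∧ b + v.length + u.length ≤ b' + v'.length := by
  obtain ⟨w₂, hw₂⟩ := htrans v u hv hu
  obtain ⟨w₁, hw₁⟩ := htrans u (v ++ w₂ ++ u) hu hw₂
  set b' := b - u.length - w₁.length
  have hb : b' + (u ++ w₁).length = b := by simp [b']
  refine ⟨u ++ w₁ ++ (v ++ w₂ ++ u), b', hw₁, fun x hx => ⟨⟨?_, ?_⟩, ?_⟩, by omega, by simp; omega⟩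
  · have := cylAt_append_right _ _ _ hx
    rw [hb] at this
    exact cylAt_append_left _ _ _ (cylAt_append_left _ _ _ this)
  · exact cylAt_append_left _ _ _ (cylAt_append_left _ _ _ hx)
  · have := cylAt_append_right _ _ _ (cylAt_append_right _ _ _ hx)
    convert this using 2
    simp [b']
    ring

lemma exists_mem_cylAt_unbounded [TopologicalSpace A] [DiscreteTopology A] [Finite A]
    (hS : IsSubshift S) (htrans : transitiveSubshift S) {u : List A} (hu : inLang S u)
    (hu₀ : u ≠ []) :
    ∃ x ∈ S, ∀ k : ℕ, ∃ t t' : ℤ, t ≤ -k ∧ k ≤ t' ∧ x ∈ cylAt u t ∧ x ∈ cylAt u t' := by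
  have hlen : (1 : ℤ) ≤ u.length := by simp [Nat.one_le_iff_ne_zero, hu₀]
  have step : ∀ t : {p : List A × ℤ // inLang S p.1}, ∃ t' : {p : List A × ℤ // inLang S p.1},
      cylAt t'.1.1 t'.1.2 ⊆ cylAt t.1.1 t.1.2 ∩ cylAt u t'.1.2 ∩
        cylAt u (t'.1.2 + t'.1.1.length - u.length) ∧
      t'.1.2 + u.length ≤ t.1.2 ∧ t.1.2 + t.1.1.length + u.length ≤ t'.1.2 + t'.1.1.length :=
    fun t => by
      obtain ⟨v', b', hv', h⟩ := hu.exists_surround htrans t.2 t.1.2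
      exact ⟨⟨(v', b'), hv'⟩, h⟩
  choose next hnext using step
  set seq := fun k : ℕ => next^[k] ⟨(u, 0), hu⟩
  have hseq : ∀ k, seq (k + 1) = next (seq k) := fun k => Function.iterate_succ_apply' _ _ _
  have hbounds : ∀ k : ℕ, (seq k).1.2 ≤ -k ∧ k ≤ (seq k).1.2 + (seq k).1.1.length - u.length := by
    intro k
    induction k with
    | zero => simp [seq]
    | succ k ih =>
      have := (hnext (seq k)).2
      rw [hseq]
      push_cast
      omega
  obtain ⟨x, hx⟩ : (⋂ k, S ∩ cylAt (seq k).1.1 (seq k).1.2).Nonempty :=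
    IsCompact.nonempty_iInter_of_sequence_nonempty_isCompact_isClosed _
      (fun k => by
        rw [hseq]
        exact Set.inter_subset_inter_right _ fun y hy => ((hnext _).1 hy).1.1)
      (fun k => (seq k).2.exists_mem_cylAt hS.2 _)
      (hS.1.inter (isClosed_cylAt _ _)).isCompact
      fun k => hS.1.inter (isClosed_cylAt _ _)
  rw [Set.mem_iInter] at hx
  refine ⟨x, (hx 0).1, fun k => ?_⟩
  have hxk := (hnext (seq k)).1 (hseq k ▸ (hx (k + 1)).2)
  have hk := hbounds (k + 1)
  rw [hseq] at hk
  exact ⟨_, _, by omega, by omega, hxk.1.2, hxk.2⟩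

lemma eqPt_of_mem_cylAt_unbounded (hF : IsCA F r s) (hS : shift '' S = S) {h : ℕ → ℤ} {e : ℕ}
    {p : ℤ} {u : List A} (hvar : ∀ n, |h (n + 1) - h n| + s < e ∧ |h (n + 1) - h n| - r < e)
    (hcons : band h (fun n => h n + e) ⊆ consSet F (S ∩ cylAt u p)) {x : ℤ → A} (hxS : x ∈ S)
    (hx : ∀ k : ℕ, ∃ t t' : ℤ, t ≤ -k ∧ k ≤ t' ∧ x ∈ cylAt u t ∧ x ∈ cylAt u t') :
    eqPt F S h x := by
  intro k
  obtain ⟨t, t', ht, ht', hxt, hxt'⟩ := hx (k + p.natAbs + 1)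
  set m := t.natAbs + t'.natAbs + u.length + (h 0).natAbs + p.natAbs + e
  refine ⟨m, fun y hyS hxy => ?_⟩
  set X := {z | z ∈ S ∧ close m x z}
  have hagree : ∀ z ∈ X, ∀ j : ℤ, -(m : ℤ) ≤ j → j ≤ m → x j = z j :=
    fun z hz j h₁ h₂ => hz.2 j (abs_le.2 ⟨h₁, h₂⟩)
  have hwall : ∀ t₀ : ℤ, -(m : ℤ) ≤ t₀ → t₀ + u.length ≤ m → x ∈ cylAt u t₀ →
      band (fun n => h n + (t₀ - p)) (fun n => h n + e + (t₀ - p)) ⊆ consSet F X :=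
    fun t₀ h₁ h₂ hxt₀ => (band_translate_subset_consSet hF hS hcons t₀).trans <| consSet_anti
      fun z hz => ⟨hz.1, mem_cylAt_of_eqOn hxt₀ fun j _ _ => hagree z hz j (by omega) (by omega)⟩
  have hband := band_subset_consSet hF (fun n => by linarith [(le_of_abs_sub_lt (hvar n)).1])
    (fun n => by linarith [(le_of_abs_sub_lt (hvar n)).2])
    (hwall t (by omega) (by omega) hxt) (hwall t' (by omega) (by omega) hxt')
    fun i h₁ h₂ z hz z' hz' => (hagree z hz i (by omega) (by omega)).symm.trans
      (hagree z' hz' i (by omega) (by omega))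
  intro n i hi
  obtain ⟨hi₁, hi₂⟩ := abs_le.1 hi
  exact hband (a := (i + h n, n)) ⟨by dsimp; omega, by dsimp; omega⟩ x ⟨hxS, fun _ _ => rfl⟩ y
    ⟨hyS, hxy⟩

lemma exists_eqPt_of_blockingWord [TopologicalSpace A] [DiscreteTopology A] [Finite A]
    (hF : IsCA F r s) (hS : IsSubshift S) (htrans : transitiveSubshift S) {h : ℕ → ℤ}
    {u : List A} (hu : blockingWord F S h r s u) : ∃ x ∈ S, eqPt F S h x := by
  obtain ⟨hu, e, he, hvar, hlen, p, hcons⟩ := hu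
  obtain ⟨x, hxS, hx⟩ :=
    exists_mem_cylAt_unbounded hS htrans hu (by rintro rfl; simp at hlen; omega)
  exact ⟨x, hxS, eqPt_of_mem_cylAt_unbounded hF hS.2 hvar hcons hxS hx⟩

end Blocking

theorem stmt8_general {A : Type*} [Fintype A] [TopologicalSpace A] [DiscreteTopology A]
    (F : (ℤ → A) → (ℤ → A)) (r s : ℤ) (hF : IsCA F r s)
    (S : Set (ℤ → A)) (hS : IsSubshift S) (htrans : transitiveSubshift S)
    (h' h h'' : ℕ → ℤ) (hb : BV h)
    (h1 : precsim h' h) (h2 : precsim h h'')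
    (u' u'' : List A)
    (hw' : blockingWord F S h' r s u') (hw'' : blockingWord F S h'' r s u'') :
    (∃ u : List A, blockingWord F S h r s u) ∧ (∃ x ∈ S, eqPt F S h x) := by
  obtain ⟨u, hu⟩ := exists_blockingWord_of_precsim hF hS.2 htrans hb h1 h2 hw' hw''
  exact ⟨⟨u, hu⟩, exists_eqPt_of_blockingWord hF hS htrans hu⟩

/-- convexity of the set of curves admitting blocking words
(equivalently equicontinuous points): if `h' ≾ h ≾ h''` and there are blocking
words along `h'` and `h''`, then there is one along `h`. -/
theorem stmt8 {A : Type*} [Fintype A] [TopologicalSpace A] [DiscreteTopology A]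
    (F : (ℤ → A) → (ℤ → A)) (r s : ℤ) (hF : IsCA F r s)
    (S : Set (ℤ → A)) (hS : IsSubshift S) (htrans : transitiveSubshift S)
    (h' h h'' : ℕ → ℤ) (hb' : BV h') (hb : BV h) (hb'' : BV h'')
    (h1 : precsim h' h) (h2 : precsim h h'')
    (u' u'' : List A)
    (hw' : blockingWord F S h' r s u') (hw'' : blockingWord F S h'' r s u'') :
    (∃ u : List A, blockingWord F S h r s u) ∧ (∃ x ∈ S, eqPt F S h x) :=
  stmt8_general F r s hF S hS htrans h' h h'' hb h1 h2 u' u'' hw' hw''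
end

section
/- Let (A^ℤ, F) be a cellular automaton and Σ a subshift. Suppose there exist k ≤ l in ℤ and a curve h : ℕ → ℤ such that for all x, x' ∈ Σ with x_⟦k,l⟧ = x'_⟦k,l⟧ and all t ∈ ℕ one has F^t(x)_{h(t)} = F^t(x')_{h(t)}. Then there exist times t₁ < t₂ such that σ^{h(t₂)−h(t₁)} ∘ F^{t₂} = F^{t₁} on Σ; consequently there is a rational α = (h(t₂)−h(t₁))/(t₂−t₁) such that h_α(n) = ⌊αn⌋ is a direction of uniform equicontinuity for F on Σ. -/
/-!
For each time `t`, the pairs `(x|⟦k,l⟧, F^t(x)_{h(t)})`, `x ∈ Σ`, form a subset of the finite set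
`A^⟦k,l⟧ × A`, so two times `t₁ < t₂` give the same subset; then the trace at `h(t₁)` and at
`h(t₂)` agree on `Σ`, and shift invariance of `Σ` spreads this to every cell:
`F^{t₂}(x)_{i+d} = F^{t₁}(x)_i` with `d = h(t₂) - h(t₁)`. Hence from time `t₁` on the orbit is
periodic up to a shift by `d` every `p = t₂ - t₁` steps, which is exactly one step of `⌊αn⌋` for
`α = d/p`. Along that curve every time thus reduces to a time before `t₂`, and finitely many
iterates of a cellular automaton are uniformly continuous.
-/

open Classical

section TraceDirection

variable {A : Type*}

def shiftBy (m : ℤ) (x : ℤ → A) : ℤ → A := fun i => x (i + m)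

@[simp]
lemma shiftBy_apply (m : ℤ) (x : ℤ → A) (i : ℤ) : shiftBy m x i = x (i + m) := rfl

lemma shiftBy_shiftBy (a b : ℤ) (x : ℤ → A) : shiftBy a (shiftBy b x) = shiftBy (a + b) x := by
  funext i
  simp only [shiftBy_apply, add_assoc]

lemma shiftBy_induction {P : ((ℤ → A) → (ℤ → A)) → Prop} (h_id : P id)
    (h_comp : ∀ f g, P f → P g → P (f ∘ g)) (h_one : P (shiftBy 1)) (h_neg_one : P (shiftBy (-1)))
    (m : ℤ) : P (shiftBy m) := by
  induction m using Int.induction_on with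
  | zero => convert h_id; funext x i; simp
  | succ m ih =>
    convert h_comp _ _ ih h_one using 1
    funext x
    simp [shiftBy_shiftBy]
  | pred m ih =>
    convert h_comp _ _ ih h_neg_one using 1
    funext x
    simp [shiftBy_shiftBy, sub_eq_add_neg]

lemma shiftBy_neg_one_shift (x : ℤ → A) : shiftBy (-1) (shift x) = x := by
  funext i
  simp [shift]

lemma shift_shiftBy_neg_one (x : ℤ → A) : shift (shiftBy (-1) x) = x := by
  funext i
  simp [shift]

lemma mapsTo_shiftBy {S : Set (ℤ → A)} (hS : shift '' S = S) (m : ℤ) :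
    Set.MapsTo (shiftBy m) S S := by
  refine shiftBy_induction (P := fun f => Set.MapsTo f S S) (Set.mapsTo_id S)
    (fun f g hf hg => hf.comp hg)
    (fun x hx => hS ▸ Set.mem_image_of_mem shift hx) (fun x hx => ?_) m
  rw [← hS] at hx
  obtain ⟨y, hy, rfl⟩ := hx
  rwa [shiftBy_neg_one_shift]

lemma commute_shiftBy {F : (ℤ → A) → (ℤ → A)} (hF : Function.Commute F shift) (m : ℤ) :
    Function.Commute F (shiftBy m) := by
  refine shiftBy_induction (P := Function.Commute F) Function.Commute.id_right
    (fun f g hf hg => hf.comp_right hg) hF (fun x => ?_) m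
  calc F (shiftBy (-1) x) = shiftBy (-1) (shift (F (shiftBy (-1) x))) :=
        (shiftBy_neg_one_shift _).symm
    _ = shiftBy (-1) (F x) := by rw [← hF, shift_shiftBy_neg_one]

namespace IsCA

variable {F : (ℤ → A) → (ℤ → A)} {r s : ℤ}

lemma apply_eq_of_agree (hF : IsCA F r s) {x y : ℤ → A} {j : ℤ}
    (hxy : ∀ i, |i - j| ≤ |r| + |s| → x i = y i) : F x j = F y j := by
  have hloc : F (shiftBy j x) 0 = F (shiftBy j y) 0 := by
    refine hF.2 _ _ fun i hri his => hxy (i + j) ?_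
    rw [add_sub_cancel_right, abs_le]
    constructor <;> linarith [neg_abs_le r, le_abs_self s, abs_nonneg r, abs_nonneg s]
  simpa [commute_shiftBy hF.1 j _] using hloc

lemma iterate_apply_eq_of_agree (hF : IsCA F r s) (t : ℕ) {x y : ℤ → A} {j : ℤ}
    (hxy : ∀ i, |i - j| ≤ t * (|r| + |s|) → x i = y i) : F^[t] x j = F^[t] y j := by
  induction t generalizing j with
  | zero => exact hxy j (by simp)
  | succ t ih =>
    rw [Function.iterate_succ_apply', Function.iterate_succ_apply']
    refine hF.apply_eq_of_agree fun i hi => ih fun w hw => hxy w ?_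
    calc |w - j| ≤ |w - i| + |i - j| := abs_sub_le w i j
      _ ≤ ((t + 1 : ℕ) : ℤ) * (|r| + |s|) := by push_cast; linarith

lemma exists_close_tube_of_reduction (hF : IsCA F r s) {S : Set (ℤ → A)} {g : ℕ → ℤ} {T : ℕ}
    (hred : ∀ n, ∃ t < T, ∀ x ∈ S, ∀ i, F^[n] x (i + g n) = F^[t] x (i + g t)) (K : ℕ) :
    ∃ m : ℕ, ∀ x ∈ S, ∀ y ∈ S, close m x y → tube F g K x y := by
  set B := (Finset.range T).sup fun t => (g t).natAbs
  refine ⟨K + B + T * (r.natAbs + s.natAbs), fun x hx y hy hxy n i hi => ?_⟩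
  obtain ⟨t, ht, hxt⟩ := hred n
  rw [hxt x hx, hxt y hy]
  refine hF.iterate_apply_eq_of_agree t fun w hw => hxy w ?_
  have hgt : |g t| ≤ B := by
    rw [← Int.natCast_natAbs]
    exact_mod_cast Finset.le_sup (f := fun t => (g t).natAbs) (Finset.mem_range.mpr ht)
  have htT : (t : ℤ) * (|r| + |s|) ≤ T * (|r| + |s|) := by gcongr
  calc |w| ≤ |w - (i + g t)| + |i| + |g t| := by
        linarith [abs_sub_abs_le_abs_sub w (i + g t), abs_add_le i (g t)]
    _ ≤ _ := by push_cast [Int.natCast_natAbs]; linarith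

end IsCA

lemma exists_lt_eqOn_of_factor {X W B : Type*} [Finite W] [Finite B] {S : Set X} (π : X → W)
    (g : ℕ → X → B) (hg : ∀ t, ∀ x ∈ S, ∀ y ∈ S, π x = π y → g t x = g t y) :
    ∃ t₁ t₂, t₁ < t₂ ∧ Set.EqOn (g t₁) (g t₂) S := by
  obtain ⟨t₁, t₂, hlt, hgraph⟩ := Set.finite_univ.exists_lt_map_eq_of_forall_mem
    (f := fun t => (fun x => (π x, g t x)) '' S) fun _ => Set.mem_univ _
  refine ⟨t₁, t₂, hlt, fun x hx => ?_⟩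
  obtain ⟨y, hy, hyx⟩ : (π x, g t₁ x) ∈ (fun x => (π x, g t₂ x)) '' S :=
    hgraph ▸ ⟨x, hx, rfl⟩
  rw [Prod.mk.injEq] at hyx
  rw [← hyx.2, hg t₂ x hx y hy hyx.1.symm]

lemma iterate_apply_add_sub_eq_of_eqOn {F : (ℤ → A) → (ℤ → A)} (hF : Function.Commute F shift)
    {S : Set (ℤ → A)} (hS : shift '' S = S) {h : ℕ → ℤ} {t₁ t₂ : ℕ}
    (htrace : Set.EqOn (fun x => F^[t₁] x (h t₁)) (fun x => F^[t₂] x (h t₂)) S) :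
    ∀ x ∈ S, ∀ i, F^[t₂] x (i + (h t₂ - h t₁)) = F^[t₁] x i := by
  intro x hx i
  have := htrace (mapsTo_shiftBy hS (i - h t₁) hx)
  simp only [((commute_shiftBy hF _).iterate_left _) x, shiftBy_apply] at this
  convert this.symm using 2 <;> ring

lemma iterate_add_apply_add_eq {F : (ℤ → A) → (ℤ → A)} (hF : Function.Commute F shift)
    {S : Set (ℤ → A)} {t₁ p : ℕ} {d : ℤ}
    (hperiod : ∀ x ∈ S, ∀ i, F^[t₁ + p] x (i + d) = F^[t₁] x i)
    {x : ℤ → A} (hx : x ∈ S) {n : ℕ} (hn : t₁ ≤ n) (j : ℤ) :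
    F^[n + p] x (j + d) = F^[n] x j := by
  obtain ⟨c, rfl⟩ := Nat.exists_eq_add_of_le hn
  have hshift : shiftBy d (F^[t₁ + p] x) = F^[t₁] x := funext (hperiod x hx)
  calc F^[t₁ + c + p] x (j + d) = shiftBy d (F^[c] (F^[t₁ + p] x)) j := by
        rw [shiftBy_apply, ← Function.iterate_add_apply, show c + (t₁ + p) = t₁ + c + p by omega]
    _ = F^[t₁ + c] x j := by
        rw [← ((commute_shiftBy hF d).iterate_left c) _, hshift, ← Function.iterate_add_apply,
          add_comm]

lemma exists_lt_iterate_apply_eq_of_period {F : (ℤ → A) → (ℤ → A)} {S : Set (ℤ → A)}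
    {g : ℕ → ℤ} {t₁ p : ℕ} {d : ℤ} (hp : 0 < p)
    (hperiod : ∀ x ∈ S, ∀ n, t₁ ≤ n → ∀ j, F^[n + p] x (j + d) = F^[n] x j)
    (hg : ∀ n, g (n + p) = g n + d) (n : ℕ) :
    ∃ t < t₁ + p, ∀ x ∈ S, ∀ i, F^[n] x (i + g n) = F^[t] x (i + g t) := by
  induction n using Nat.strong_induction_on with
  | _ n ih =>
    by_cases hn : n < t₁ + p
    · exact ⟨n, hn, fun _ _ _ => rfl⟩
    obtain ⟨m, rfl⟩ : ∃ m, n = m + p := ⟨n - p, by omega⟩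
    obtain ⟨t, ht, hm⟩ := ih m (by omega)
    refine ⟨t, ht, fun x hx i => ?_⟩
    rw [hg, ← add_assoc, hperiod x hx m (by omega), hm x hx]

lemma floor_div_mul_add {d : ℤ} {p : ℕ} (hp : 0 < p) (n : ℕ) :
    ⌊(d / p : ℚ) * ((n + p : ℕ) : ℚ)⌋ = ⌊(d / p : ℚ) * (n : ℚ)⌋ + d := by
  rw [Nat.cast_add, mul_add, div_mul_cancel₀ _ (by positivity), Int.floor_add_intCast]

end TraceDirection

theorem stmt10_general {A : Type*} [Fintype A] [TopologicalSpace A]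
    (F : (ℤ → A) → (ℤ → A)) (r s : ℤ) (hF : IsCA F r s)
    (S : Set (ℤ → A)) (hS : IsSubshift S)
    (k l : ℤ) (h : ℕ → ℤ)
    (hyp : ∀ x ∈ S, ∀ x' ∈ S, (∀ i : ℤ, k ≤ i → i ≤ l → x i = x' i) →
      ∀ t : ℕ, F^[t] x (h t) = F^[t] x' (h t)) :
    ∃ t₁ t₂ : ℕ, t₁ < t₂ ∧
      (∀ x ∈ S, ∀ i : ℤ, F^[t₂] x (i + (h t₂ - h t₁)) = F^[t₁] x i) ∧
      ∃ α : ℚ, α = ((h t₂ - h t₁ : ℤ) : ℚ) / (((t₂ - t₁ : ℕ) : ℚ)) ∧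
        ∀ K : ℕ, ∃ m : ℕ, ∀ x ∈ S, ∀ y ∈ S, close m x y →
          tube F (fun n => ⌊α * (n : ℚ)⌋) K x y := by
  obtain ⟨t₁, t₂, hlt, htrace⟩ := exists_lt_eqOn_of_factor (S := S)
    (fun x (i : Set.Icc k l) => x i) (fun t x => F^[t] x (h t))
    fun t x hx y hy hxy => hyp x hx y hy (fun i hki hil => congrFun hxy ⟨i, hki, hil⟩) t
  have hshift := iterate_apply_add_sub_eq_of_eqOn hF.1 hS.2 htrace
  refine ⟨t₁, t₂, hlt, hshift, _, rfl, fun K => ?_⟩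
  obtain ⟨p, rfl⟩ := Nat.exists_eq_add_of_le hlt.le
  have hp : 0 < p := by omega
  rw [Nat.add_sub_cancel_left]
  exact hF.exists_close_tube_of_reduction (exists_lt_iterate_apply_eq_of_period hp
    (fun x hx n hn j => iterate_add_apply_add_eq hF.1 hshift hx hn j) (floor_div_mul_add hp)) K

/-- if the trace `F^t(x)_{h(t)}` only depends on `x_{⟦k,l⟧}`, then
two iterates coincide up to a shift on `Σ`, giving a rational direction
`α = (h(t₂)-h(t₁))/(t₂-t₁)` of uniform equicontinuity. -/
theorem stmt10 {A : Type*} [Fintype A] [TopologicalSpace A] [DiscreteTopology A]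
    (F : (ℤ → A) → (ℤ → A)) (r s : ℤ) (hF : IsCA F r s)
    (S : Set (ℤ → A)) (hS : IsSubshift S)
    (k l : ℤ) (hkl : k ≤ l) (h : ℕ → ℤ)
    (hyp : ∀ x ∈ S, ∀ x' ∈ S, (∀ i : ℤ, k ≤ i → i ≤ l → x i = x' i) →
      ∀ t : ℕ, F^[t] x (h t) = F^[t] x' (h t)) :
    ∃ t₁ t₂ : ℕ, t₁ < t₂ ∧
      (∀ x ∈ S, ∀ i : ℤ, F^[t₂] x (i + (h t₂ - h t₁)) = F^[t₁] x i) ∧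
      ∃ α : ℚ, α = ((h t₂ - h t₁ : ℤ) : ℚ) / (((t₂ - t₁ : ℕ) : ℚ)) ∧
        ∀ K : ℕ, ∃ m : ℕ, ∀ x ∈ S, ∀ y ∈ S, close m x y →
          tube F (fun n => ⌊α * (n : ℚ)⌋) K x y :=
  stmt10_general F r s hF S hS k l h hyp
end

section
/- Let F be a reversible cellular automaton and u a word of length n. If the set of consequences Cons_F([u]_0) contains a full horizontal segment of 2n consecutive sites ⟨x+k,t⟩, 0 ≤ k ≤ 2n−1, at some time t ≥ 1, then u is a uniform word (all letters of u are equal). -/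
/-!
Let `c = u^ℤ`. Splicing an extra copy of the last letter of `u` into `c` at position `n`
gives a configuration `d` in which `u` occurs both at `0` and at `n + 1`. Both occurrences see
`F^t c` on the given segment of `2n` sites, so `F^t c` agrees with its own translate by `n + 1`,
hence (being `n`-periodic) with its translate by `1`, on `n - 1` consecutive sites; by periodicity
`F^t c` is constant. Since the inverse `G^t` commutes with the shift, `c = G^t (F^t c)` is
constant too, i.e. `u` is uniform.
-/

open Classical

open Function

section PeriodicConfigurations

variable {A : Type*}

lemma shift_iterate_apply (m : ℕ) (y : ℤ → A) (i : ℤ) : shift^[m] y i = y (i + m) := by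
  induction m generalizing y with
  | zero => simp
  | succ k ih =>
    rw [iterate_succ_apply, ih]
    simp only [shift, Nat.cast_succ, add_assoc]

lemma periodic_one_iff_shift_eq {y : ℤ → A} : Periodic y 1 ↔ shift y = y :=
  funext_iff.symm

lemma periodic_one_apply_of_commute {Φ : (ℤ → A) → ℤ → A} (hΦ : Function.Commute Φ shift)
    {y : ℤ → A} (hy : Periodic y 1) : Periodic (Φ y) 1 := by
  rw [periodic_one_iff_shift_eq] at hy ⊢
  rw [← hΦ y, hy]

lemma Function.Periodic.eq_of_step_eq {v : ℤ → A} {n : ℕ} (hv : Periodic v n) (hn : 0 < n)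
    {a : ℤ} (hstep : ∀ k : ℕ, k + 1 < n → v (a + k + 1) = v (a + k)) (p : ℤ) : v p = v a := by
  have hwindow : ∀ k : ℕ, k < n → v (a + k) = v a := by
    intro k
    induction k with
    | zero => simp
    | succ k ih =>
      intro hk
      rw [Nat.cast_succ, ← add_assoc, hstep k hk, ih (by omega)]
  obtain ⟨q, ⟨haq, hqa⟩, hpq⟩ := hv.exists_mem_Ico (by exact_mod_cast hn) p a
  obtain ⟨k, rfl⟩ : ∃ k : ℕ, q = a + k := ⟨(q - a).toNat, by omega⟩
  rw [hpq, hwindow k (by omega)]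

/-- The bi-infinite periodic configuration `u^ℤ`, with `u` at position `0`. -/
def periodicExt (u : List A) (hu : 0 < u.length) : ℤ → A :=
  fun p => u.get ⟨p.natMod u.length, Int.natMod_lt hu.ne'⟩

lemma periodicExt_periodic (u : List A) (hu : 0 < u.length) :
    Periodic (periodicExt u hu) u.length := by
  intro p
  simp [periodicExt, Int.natMod]

lemma periodicExt_mem_cylAt (u : List A) (hu : 0 < u.length) : periodicExt u hu ∈ cylAt u 0 := by
  intro i
  have hi : ((i : ℕ) : ℤ) % u.length = i := Int.emod_eq_of_lt (by positivity) (by omega)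
  simp [periodicExt, Int.natMod, hi]

/-- `u^ℤ` with its letter at position `n - 1` doubled, where `n` is the length of `u`. -/
def periodicExtDup (u : List A) (hu : 0 < u.length) : ℤ → A :=
  fun p => if p < u.length then periodicExt u hu p else periodicExt u hu (p - 1)

lemma periodicExtDup_mem_cylAt (u : List A) (hu : 0 < u.length) :
    periodicExtDup u hu ∈ cylAt u 0 := by
  intro i
  have hi : (0 : ℤ) + (i : ℕ) < u.length := by omega
  simp only [periodicExtDup, if_pos hi]
  exact periodicExt_mem_cylAt u hu i

lemma shift_iterate_periodicExtDup_mem_cylAt (u : List A) (hu : 0 < u.length) :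
    shift^[u.length + 1] (periodicExtDup u hu) ∈ cylAt u 0 := by
  intro i
  have hi : ¬ ((0 : ℤ) + (i : ℕ) + ((u.length + 1 : ℕ) : ℤ) < u.length) := by omega
  rw [shift_iterate_apply]
  simp only [periodicExtDup, if_neg hi]
  rw [show (0 : ℤ) + (i : ℕ) + ((u.length + 1 : ℕ) : ℤ) - 1 = 0 + (i : ℕ) + u.length by
    push_cast; ring, periodicExt_periodic]
  exact periodicExt_mem_cylAt u hu i

theorem iterate_periodicExt_eq_const {F : (ℤ → A) → ℤ → A} (hF : Function.Commute F shift)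
    {u : List A} (hu : 0 < u.length) {x : ℤ} {t : ℕ}
    (hcons : ∀ k : ℕ, k ≤ 2 * u.length - 1 → (x + (k : ℤ), t) ∈ consSet F (cylAt u 0))
    (p : ℤ) : F^[t] (periodicExt u hu) p = F^[t] (periodicExt u hu) x := by
  set n := u.length
  set c := periodicExt u hu
  set d := periodicExtDup u hu
  have hc : c ∈ cylAt u 0 := periodicExt_mem_cylAt u hu
  have hv : Periodic (F^[t] c) n := by
    intro q
    have hshift : shift^[n] c = c := funext fun q => by
      rw [shift_iterate_apply]; exact periodicExt_periodic u hu q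
    rw [← shift_iterate_apply n (F^[t] c), ← (hF.iterate_iterate t n) c, hshift]
  have hd₀ : ∀ k : ℕ, k ≤ 2 * n - 1 → F^[t] d (x + k) = F^[t] c (x + k) := fun k hk =>
    hcons k hk d (periodicExtDup_mem_cylAt u hu) c hc
  have hd₁ : ∀ k : ℕ, k ≤ 2 * n - 1 → F^[t] d (x + k + (n + 1 : ℕ)) = F^[t] c (x + k) :=
    fun k hk => by
      have h := hcons k hk _ (shift_iterate_periodicExtDup_mem_cylAt u hu) c hc
      rwa [(hF.iterate_iterate t (n + 1)) d, shift_iterate_apply] at h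
  refine hv.eq_of_step_eq hu (fun k hk => ?_) p
  calc F^[t] c (x + k + 1) = F^[t] c (x + (k + n + 1 : ℕ)) := by
        rw [← hv]; push_cast; ring_nf
    _ = F^[t] d (x + k + (n + 1 : ℕ)) := by
        rw [← hd₀ _ (by omega)]; push_cast; ring_nf
    _ = F^[t] c (x + k) := hd₁ k (by omega)

end PeriodicConfigurations

theorem stmt15_general {A : Type*}
    (F G : (ℤ → A) → (ℤ → A)) (r s r' s' : ℤ)
    (hF : IsCA F r s) (hG : IsCA G r' s')
    (hinv₁ : Function.LeftInverse G F)
    (u : List A) (x : ℤ) (t : ℕ)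
    (hcons : ∀ k : ℕ, k ≤ 2 * u.length - 1 →
      (x + (k : ℤ), t) ∈ consSet F (cylAt u 0)) :
    ∀ i j : Fin u.length, u.get i = u.get j := by
  intro i j
  have hu : 0 < u.length := i.pos
  set c := periodicExt u hu
  have hv : Periodic (F^[t] c) 1 := fun p =>
    (iterate_periodicExt_eq_const hF.1 hu hcons (p + 1)).trans
      (iterate_periodicExt_eq_const hF.1 hu hcons p).symm
  have hc : Periodic c 1 := by
    simpa only [hinv₁.iterate t c] using
      periodic_one_apply_of_commute (Function.Commute.iterate_left hG.1 t) hv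
  have hget : ∀ k : Fin u.length, u.get k = c 0 := fun k => by
    rw [← periodicExt_mem_cylAt u hu k, zero_add, ← hc.nat_mul_eq k, mul_one]
  rw [hget i, hget j]

/-- for a reversible CA, if the consequences of a word `u` of
length `n` contain `2n` consecutive sites on some row `t ≥ 1`, then `u` is a
uniform word. -/
theorem stmt15 {A : Type*} [Fintype A]
    (F G : (ℤ → A) → (ℤ → A)) (r s r' s' : ℤ)
    (hF : IsCA F r s) (hG : IsCA G r' s')
    (hinv₁ : Function.LeftInverse G F) (hinv₂ : Function.RightInverse G F)
    (u : List A) (x : ℤ) (t : ℕ) (ht : 1 ≤ t)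
    (hcons : ∀ k : ℕ, k ≤ 2 * u.length - 1 →
      (x + (k : ℤ), t) ∈ consSet F (cylAt u 0)) :
    ∀ i j : Fin u.length, u.get i = u.get j :=
  stmt15_general F G r s r' s' hF hG hinv₁ u x t hcons
end
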